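/- arXiv:2411.12318 — 13 statements merged into one kernel-verified Lean document; each statement's English description precedes it below -/
import Mathlib

section
/- Let R be an inverse semiring. Then every element of R has an additive inverse (i.e., for all x ∈ R, x + (-x) = 0, so R is a ring) if and only if 0_1 = 0, i.e., 1 + (-1) = 0. -/
/-- An inverse semiring is a ring (every element has an additive inverse)
if and only if `0_1 = 0`. -/
theorem stmt_4 {R : Type*} [Semiring R] (neg : R → R)
    (hinv : ∀ x : R, x + neg x + x = x)
    (hinv' : ∀ x : R, neg x + x + neg x = neg x) :
    (∀ x : R, x + neg x = 0) ↔ (1 : R) + neg 1 = 0 := by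
  constructor
  · intro h; exact h 1
  · intro h1 x
    -- show neg x = x * neg 1 by uniqueness of inverses
    have hz1 : x + x * neg 1 + x = x := by
      have := congrArg (x * ·) (hinv 1)
      simpa [mul_add] using this
    have hz2 : x * neg 1 + x + x * neg 1 = x * neg 1 := by
      have := congrArg (x * ·) (hinv' 1)
      simpa [mul_add] using this
    have key : neg x = x * neg 1 := by
      have e1 : neg x = neg x + x + (x * neg 1) := by
        calc neg x = neg x + x + neg x := (hinv' x).symm
          _ = neg x + (x + x * neg 1 + x) + neg x := by rw [hz1]
          _ = (neg x + x + neg x) + x + x * neg 1 := by abel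
          _ = neg x + x + x * neg 1 := by rw [hinv' x]
      have e2 : x * neg 1 = x * neg 1 + x + neg x := by
        calc x * neg 1 = x * neg 1 + x + x * neg 1 := hz2.symm
          _ = x * neg 1 + (x + neg x + x) + x * neg 1 := by rw [hinv x]
          _ = (x * neg 1 + x + x * neg 1) + x + neg x := by abel
          _ = x * neg 1 + x + neg x := by rw [hz2]
      calc neg x = neg x + x + x * neg 1 := e1
        _ = x * neg 1 + x + neg x := by abel
        _ = x * neg 1 := e2.symm
    rw [key]
    rw [← mul_one x, mul_assoc, ← mul_add, one_mul, h1, mul_zero]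
end

section
/- Let R be an inverse semiring. Then addition in R is idempotent (i.e., x + x = x for all x ∈ R, so R is an idempotent semiring) if and only if 0_1 = 1, i.e., 1 + (-1) = 1. -/
/-- An inverse semiring is an idempotent semiring (addition is idempotent)
if and only if `0_1 = 1`. -/
theorem stmt_5 {R : Type*} [Semiring R] (neg : R → R)
    (hinv : ∀ x : R, x + neg x + x = x)
    (hinv' : ∀ x : R, neg x + x + neg x = neg x) :
    (∀ x : R, x + x = x) ↔ (1 : R) + neg 1 = 1 := by
  constructor
  · intro h
    have h1 : neg 1 + 1 = neg 1 := by
      conv_rhs => rw [← hinv' 1]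
      rw [add_right_comm, h (neg 1)]
    calc (1 : R) + neg 1 = 1 + neg 1 + 1 := by rw [add_assoc, add_comm (neg 1) 1, ← add_assoc, h 1]
    _ = 1 := hinv 1
  · intro h x
    have h11 : (1 : R) + 1 = 1 := by
      conv_rhs => rw [← hinv 1]
      rw [h]
    calc x + x = x * (1 + 1) := by rw [mul_add, mul_one]
    _ = x := by rw [h11, mul_one]
end

section
/- Let R be an inverse semiring. Then the set G(0_1) = {x ∈ R | x + (-x) = 1 + (-1)} is a ring: it contains 1, it is closed under multiplication, addition, and neg, and its addition makes it an abelian group with identity element 0_1 (in particular x + 0_1 = x and x + (-x) = 0_1 for all x ∈ G(0_1)). -/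
/-- Uniqueness of additive inverses in a commutative semigroup. -/
lemma uniq_inv {R : Type*} [AddCommMonoid R] (x a b : R)
    (ha2 : a + x + a = a) (hb1 : x + b + x = x) (hb2 : b + x + b = b)
    (ha1 : x + a + x = x) : a = b := by
  have h1 : a = a + b + x := by
    calc a = a + x + a := ha2.symm
      _ = a + (x + b + x) + a := by rw [hb1]
      _ = (a + x + a) + (b + x) := by abel
      _ = a + b + x := by rw [ha2]; abel
  have h2 : b = a + b + x := by
    calc b = b + x + b := hb2.symm
      _ = b + (x + a + x) + b := by rw [ha1]
      _ = (b + x + b) + (a + x) := by abel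
      _ = a + b + x := by rw [hb2]; abel
  exact h1.trans h2.symm

/-- In an inverse semiring, `G(0_1) = {x | x + (-x) = 1 + (-1)}` is a ring:
it contains `1`, is closed under multiplication, addition and `neg`, and its
addition is an abelian group with identity `0_1`. -/
theorem stmt_7 {R : Type*} [Semiring R] (neg : R → R)
    (hinv : ∀ x : R, x + neg x + x = x)
    (hinv' : ∀ x : R, neg x + x + neg x = neg x) :
    ((1 : R) + neg 1 = 1 + neg 1) ∧
      (∀ x y : R, x + neg x = 1 + neg 1 → y + neg y = 1 + neg 1 →
        x * y + neg (x * y) = 1 + neg 1) ∧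
      (∀ x y : R, x + neg x = 1 + neg 1 → y + neg y = 1 + neg 1 →
        (x + y) + neg (x + y) = 1 + neg 1) ∧
      (∀ x : R, x + neg x = 1 + neg 1 → neg x + neg (neg x) = 1 + neg 1) ∧
      (∀ x : R, x + neg x = 1 + neg 1 → x + (1 + neg 1) = x) ∧
      (∀ x : R, x + neg x = 1 + neg 1 → x + neg x = 1 + neg 1) := by
  -- neg (x*y) = x * neg y
  have hmul : ∀ x y : R, neg (x * y) = x * neg y := by
    intro x y
    refine uniq_inv (x * y) _ _ (hinv' _) ?_ ?_ (hinv _)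
    · calc x * y + x * neg y + x * y = x * (y + neg y + y) := by rw [mul_add, mul_add]
        _ = x * y := by rw [hinv]
    · calc x * neg y + x * y + x * neg y = x * (neg y + y + neg y) := by rw [mul_add, mul_add]
        _ = x * neg y := by rw [hinv']
  -- neg x = x * neg 1
  have hneg1 : ∀ x : R, neg x = x * neg 1 := by
    intro x
    refine uniq_inv x _ _ (hinv' _) ?_ ?_ (hinv _)
    · calc x + x * neg 1 + x = x * (1 + neg 1 + 1) := by rw [mul_add, mul_add, mul_one]
        _ = x := by rw [hinv, mul_one]
    · calc x * neg 1 + x + x * neg 1 = x * (neg 1 + 1 + neg 1) := by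
            rw [mul_add, mul_add, mul_one]
        _ = x * neg 1 := by rw [hinv']
  -- neg (x+y) = neg x + neg y
  have hadd : ∀ x y : R, neg (x + y) = neg x + neg y := by
    intro x y
    refine uniq_inv (x + y) _ _ (hinv' _) ?_ ?_ (hinv _)
    · calc (x + y) + (neg x + neg y) + (x + y)
          = (x + neg x + x) + (y + neg y + y) := by abel
        _ = x + y := by rw [hinv, hinv]
    · calc (neg x + neg y) + (x + y) + (neg x + neg y)
          = (neg x + x + neg x) + (neg y + y + neg y) := by abel
        _ = neg x + neg y := by rw [hinv', hinv']
  -- 0_1 idempotent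
  have hid : (1 : R) + neg 1 + (1 + neg 1) = 1 + neg 1 := by
    calc (1 : R) + neg 1 + (1 + neg 1) = (1 + neg 1 + 1) + neg 1 := by abel
      _ = 1 + neg 1 := by rw [hinv]
  refine ⟨rfl, ?_, ?_, ?_, ?_, fun x hx => hx⟩
  · intro x y hx hy
    calc x * y + neg (x * y) = x * (y + neg y) := by rw [hmul, mul_add]
      _ = x * (1 + neg 1) := by rw [hy]
      _ = x + neg x := by rw [mul_add, mul_one, hneg1 x]
      _ = 1 + neg 1 := hx
  · intro x y hx hy
    calc (x + y) + neg (x + y) = (x + neg x) + (y + neg y) := by rw [hadd]; abel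
      _ = (1 + neg 1) + (1 + neg 1) := by rw [hx, hy]
      _ = 1 + neg 1 := hid
  · intro x hx
    have hnn : neg (neg x) = x :=
      uniq_inv (neg x) _ _ (hinv' _) (hinv' x) (hinv x) (hinv _)
    rw [hnn, add_comm]; exact hx
  · intro x hx
    calc x + (1 + neg 1) = x + (x + neg x) := by rw [hx]
      _ = x + neg x + x := by abel
      _ = x := hinv x
end

section
/- Let R be an inverse semiring, z ∈ R an additive idempotent, s ∈ G(0_1) and x ∈ G(z). Then s·x ∈ G(z) and x·s ∈ G(z); that is, if s + (-s) = 1 + (-1) and x + (-x) = z, then s·x + (-(s·x)) = z and x·s + (-(x·s)) = z. -/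
/-- Uniqueness of pseudo-inverses in a commutative additive monoid. -/
lemma pseudo_inv_unique {R : Type*} [AddCommMonoid R] (a b c : R)
    (hb1 : a + b + a = a) (hb2 : b + a + b = b)
    (hc1 : a + c + a = a) (hc2 : c + a + c = c) : b = c := by
  have h1 : b = a + b + c := by
    conv_lhs => rw [← hb2, ← hc1]
    have : b + (a + c + a) + b = (b + a + b) + (a + c) := by abel
    rw [this, hb2]; abel
  have h2 : c = a + b + c := by
    conv_lhs => rw [← hc2, ← hb1]
    have : c + (a + b + a) + c = (c + a + c) + (a + b) := by abel
    rw [this, hc2]; abel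
  exact h1.trans h2.symm

/-- In an inverse semiring, `G(z)` is stable under left and right
multiplication by scalars, i.e. elements of `G(0_1)`. -/
theorem stmt_8 {R : Type*} [Semiring R] (neg : R → R)
    (hinv : ∀ x : R, x + neg x + x = x)
    (hinv' : ∀ x : R, neg x + x + neg x = neg x)
    (z : R) (hz : z + z = z)
    (s x : R) (hs : s + neg s = 1 + neg 1) (hx : x + neg x = z) :
    s * x + neg (s * x) = z ∧ x * s + neg (x * s) = z := by
  -- neg (s * x) = neg s * x
  have key : ∀ a b : R, neg (a * b) = neg a * b := by
    intro a b
    refine pseudo_inv_unique (a * b) _ _ (hinv _) (hinv' _) ?_ ?_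
    · rw [← add_mul, ← add_mul, hinv a]
    · rw [← add_mul, ← add_mul, hinv' a]
  have key' : ∀ a b : R, neg (a * b) = a * neg b := by
    intro a b
    refine pseudo_inv_unique (a * b) _ _ (hinv _) (hinv' _) ?_ ?_
    · rw [← mul_add, ← mul_add, hinv b]
    · rw [← mul_add, ← mul_add, hinv' b]
  have hneg1 : ∀ a : R, neg 1 * a = neg a := by
    intro a
    have := key 1 a
    rw [one_mul] at this; exact this.symm
  have hneg1' : ∀ a : R, a * neg 1 = neg a := by
    intro a
    have := key' a 1
    rw [mul_one] at this; exact this.symm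
  constructor
  · rw [key, ← add_mul, hs, add_mul, one_mul, hneg1, hx]
  · rw [key', ← mul_add, hs, mul_add, mul_one, hneg1', hx]
end

section
/- Let R be an inverse semiring and define 𝔷 : G(0) → R by 𝔷(x) = x + 0_1. Then 𝔷 is additive (𝔷(x + x') = 𝔷(x) + 𝔷(x') for x, x' ∈ G(0)), it is compatible with scalars (for s ∈ G(0_1) and x ∈ G(0), s·𝔷(x) = 𝔷(s·x) and 𝔷(x)·s = 𝔷(x·s)), and it satisfies 𝔷(x)·y = x·𝔷(y) for all x, y ∈ G(0). -/
/-- Uniqueness of inverses in a commutative additive monoid. -/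
lemma inv_uniq {R : Type*} [AddCommMonoid R] {a b c : R}
    (h1 : a + b + a = a) (h2 : b + a + b = b)
    (h3 : a + c + a = a) (h4 : c + a + c = c) : b = c := by
  have hc : c = b + a + c := by
    calc c = c + a + c := h4.symm
    _ = c + (a + b + a) + c := by rw [h1]
    _ = b + a + (c + a + c) := by abel
    _ = b + a + c := by rw [h4]
  calc b = b + a + b := h2.symm
  _ = b + (a + c + a) + b := by rw [h3]
  _ = c + a + (b + a + b) := by abel
  _ = c + a + b := by rw [h2]
  _ = (b + a + c) + a + b := by rw [← hc]
  _ = (b + a + b) + a + c := by abel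
  _ = b + a + c := by rw [h2]
  _ = c := hc.symm

/-- In an inverse semiring, the map `𝔷 : G(0) → G(0_1)`, `𝔷(x) = x + 0_1`, is
additive, compatible with the `G(0_1)`-scalar actions, and satisfies
`𝔷(x)·y = x·𝔷(y)` for `x, y ∈ G(0)`. -/
theorem stmt_9 {R : Type*} [Semiring R] (neg : R → R)
    (hinv : ∀ x : R, x + neg x + x = x)
    (hinv' : ∀ x : R, neg x + x + neg x = neg x) :
    (∀ x x' : R, x + neg x = 0 → x' + neg x' = 0 →
      (x + x') + (1 + neg 1) = (x + (1 + neg 1)) + (x' + (1 + neg 1))) ∧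
      (∀ s x : R, s + neg s = 1 + neg 1 → x + neg x = 0 →
        s * (x + (1 + neg 1)) = s * x + (1 + neg 1) ∧
        (x + (1 + neg 1)) * s = x * s + (1 + neg 1)) ∧
      (∀ x y : R, x + neg x = 0 → y + neg y = 0 →
        (x + (1 + neg 1)) * y = x * (y + (1 + neg 1))) := by
  -- x * neg 1 = neg x, since both are inverses of x
  have hr : ∀ x : R, x * neg 1 = neg x := by
    intro x
    refine inv_uniq (a := x) ?_ ?_ (hinv x) (hinv' x)
    · calc x + x * neg 1 + x = x * (1 + neg 1 + 1) := by
            simp only [mul_add, mul_one]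
      _ = x := by rw [hinv 1, mul_one]
    · calc x * neg 1 + x + x * neg 1 = x * (neg 1 + 1 + neg 1) := by
            simp only [mul_add, mul_one]
      _ = x * neg 1 := by rw [hinv' 1]
  have hl : ∀ x : R, neg 1 * x = neg x := by
    intro x
    refine inv_uniq (a := x) ?_ ?_ (hinv x) (hinv' x)
    · calc x + neg 1 * x + x = (1 + neg 1 + 1) * x := by
            simp only [add_mul, one_mul]
      _ = x := by rw [hinv 1, one_mul]
    · calc neg 1 * x + x + neg 1 * x = (neg 1 + 1 + neg 1) * x := by
            simp only [add_mul, one_mul]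
      _ = neg 1 * x := by rw [hinv' 1]
  have he : (1 : R) + neg 1 + (1 + neg 1) = 1 + neg 1 := by
    calc (1 : R) + neg 1 + (1 + neg 1) = (1 + neg 1 + 1) + neg 1 := by abel
    _ = 1 + neg 1 := by rw [hinv]
  refine ⟨?_, ?_, ?_⟩
  · intro x x' _ _
    calc (x + x') + (1 + neg 1) = (x + x') + (1 + neg 1 + (1 + neg 1)) := by rw [he]
    _ = (x + (1 + neg 1)) + (x' + (1 + neg 1)) := by abel
  · intro s x hs _
    constructor
    · calc s * (x + (1 + neg 1)) = s * x + (s + s * neg 1) := by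
            simp only [mul_add, mul_one]
      _ = s * x + (1 + neg 1) := by rw [hr, hs]
    · calc (x + (1 + neg 1)) * s = x * s + (s + neg 1 * s) := by
            simp only [add_mul, one_mul]
      _ = x * s + (1 + neg 1) := by rw [hl, hs]
  · intro x y hx hy
    calc (x + (1 + neg 1)) * y = x * y + (y + neg 1 * y) := by
          simp only [add_mul, one_mul]
    _ = x * y + 0 := by rw [hl, hy]
    _ = x * y + (x + x * neg 1) := by rw [hr, hx]
    _ = x * (y + (1 + neg 1)) := by
          simp only [mul_add, mul_one]
end

section
/- Let R be a semiring, M an R-module, and S a submodule of M. Then the additive congruence on M generated by the set of pairs {(s, 0) : s ∈ S} relates elements x and y if and only if there exist s, s' ∈ S with x + s = y + s'. -/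
/-!
The relation `x + s = y + s'` (the Bourne congruence of `S`) is already an additive congruence
relating each `s ∈ S` to `0`; conversely every congruence doing so relates `x + s` to `x`, so
it contains the Bourne relation.
-/

namespace AddSubmonoid

variable {M : Type*} [AddCommMonoid M] (S : AddSubmonoid M)

def bourneCon : AddCon M where
  r x y := ∃ s ∈ S, ∃ s' ∈ S, x + s = y + s'
  iseqv :=
    { refl _ := ⟨0, S.zero_mem, 0, S.zero_mem, rfl⟩
      symm := fun ⟨s, hs, s', hs', h⟩ => ⟨s', hs', s, hs, h.symm⟩
      trans := fun ⟨s, hs, s', hs', h₁⟩ ⟨t, ht, t', ht', h₂⟩ =>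
        ⟨s + t, S.add_mem hs ht, t' + s', S.add_mem ht' hs', by
          rw [← add_assoc, h₁, add_right_comm, h₂, add_assoc]⟩ }
  add' := fun ⟨s, hs, s', hs', h₁⟩ ⟨t, ht, t', ht', h₂⟩ =>
    ⟨s + t, S.add_mem hs ht, s' + t', S.add_mem hs' ht', by
      rw [add_add_add_comm, h₁, h₂, add_add_add_comm]⟩

theorem addConGen_add_mem_self {x s : M} (hs : s ∈ S) :
    addConGen (fun a b : M => a ∈ S ∧ b = 0) (x + s) x := by
  simpa using (addConGen _).add ((addConGen _).refl x) (AddConGen.Rel.of s 0 ⟨hs, rfl⟩)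

theorem addConGen_mem_zero_eq_bourneCon :
    addConGen (fun a b : M => a ∈ S ∧ b = 0) = S.bourneCon := by
  refine le_antisymm (AddCon.addConGen_le.mpr ?_) ?_
  · rintro a b ⟨ha, rfl⟩
    exact ⟨0, S.zero_mem, a, ha, by rw [add_zero, zero_add]⟩
  · rintro x y ⟨s, hs, s', hs', h⟩
    have hx := S.addConGen_add_mem_self (x := x) hs
    rw [h] at hx
    exact ((addConGen _).symm hx).trans (S.addConGen_add_mem_self hs')

end AddSubmonoid

/-- For a submodule `S` of a module `M` over a semiring, the additive
congruence generated by `s ∼ 0` for `s ∈ S` relates `x` and `y` iff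
`x + s = y + s'` for some `s, s' ∈ S`. -/
theorem stmt_11 {R : Type*} [Semiring R] {M : Type*} [AddCommMonoid M]
    [Module R M] (S : Submodule R M) (x y : M) :
    addConGen (fun a b : M => a ∈ S ∧ b = 0) x y ↔
      ∃ s ∈ S, ∃ s' ∈ S, x + s = y + s' := by
  exact AddCon.ext_iff.mp S.toAddSubmonoid.addConGen_mem_zero_eq_bourneCon x y
end

section
/- Let R be a semiring and M an R-module. A submodule S of M is subtractive if and only if there exist an R-module N and an R-linear map h : M → N such that S = h⁻¹({0}) (i.e., S is the kernel of some homomorphism of R-modules). -/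
/-- A witness that the submodule `S` arises as the kernel of an `R`-linear map
`h : M → N` into some `R`-module `N`. -/
structure KernelWitness (R M : Type) [Semiring R] [AddCommMonoid M]
    [Module R M] (S : Submodule R M) where
  N : Type
  [instAdd : AddCommMonoid N]
  [instMod : Module R N]
  h : M →ₗ[R] N
  ker : ∀ m : M, m ∈ S ↔ h m = 0

section Aux

variable {R M : Type} [Semiring R] [AddCommMonoid M] [Module R M]

/-- The Bourne congruence associated to a submodule. -/
def subAddCon (S : Submodule R M) : AddCon M where
  r a b := ∃ s ∈ S, ∃ t ∈ S, a + s = b + t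
  iseqv := by
    refine ⟨fun a => ⟨0, S.zero_mem, 0, S.zero_mem, rfl⟩,
      fun ⟨s, hs, t, ht, h⟩ => ⟨t, ht, s, hs, h.symm⟩, ?_⟩
    rintro a b c ⟨s, hs, t, ht, h1⟩ ⟨s', hs', t', ht', h2⟩
    exact ⟨s + s', S.add_mem hs hs', t' + t, S.add_mem ht' ht, by
      rw [← add_assoc, h1, add_assoc, add_comm t s', ← add_assoc, h2,
        add_assoc, add_comm t' t]⟩
  add' := by
    rintro a b c d ⟨s, hs, t, ht, h1⟩ ⟨s', hs', t', ht', h2⟩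
    refine ⟨s + s', S.add_mem hs hs', t + t', S.add_mem ht ht', ?_⟩
    calc a + c + (s + s') = (a + s) + (c + s') := by rw [add_add_add_comm]
    _ = (b + t) + (d + t') := by rw [h1, h2]
    _ = b + d + (t + t') := by rw [add_add_add_comm]

instance subConSMul (S : Submodule R M) : SMul R (subAddCon S).Quotient :=
  ⟨fun r => Quotient.map' (r • ·) (by
    rintro a b ⟨s, hs, t, ht, h⟩
    exact ⟨r • s, S.smul_mem r hs, r • t, S.smul_mem r ht, by
      rw [← smul_add, ← smul_add, h]⟩)⟩

instance subConModule (S : Submodule R M) : Module R (subAddCon S).Quotient :=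
  Function.Surjective.module R (AddCon.mk' (subAddCon S))
    (Quotient.mk''_surjective) (fun _ _ => rfl)

end Aux

/-- A submodule `S` of a module `M` over a semiring is subtractive iff it is
the kernel (preimage of `0`) of some `R`-linear map out of `M`. -/
theorem stmt_12 {R : Type} [Semiring R] {M : Type} [AddCommMonoid M]
    [Module R M] (S : Submodule R M) :
    (∀ x y : M, x ∈ S → x + y ∈ S → y ∈ S) ↔
      Nonempty (KernelWitness R M S) := by
  constructor
  · intro hsub
    refine ⟨⟨(subAddCon S).Quotient,
      { toFun := fun m => (m : (subAddCon S).Quotient)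
        map_add' := fun _ _ => rfl
        map_smul' := fun _ _ => rfl }, fun m => ?_⟩⟩
    constructor
    · intro hm
      show (m : (subAddCon S).Quotient) = (0 : M)
      rw [AddCon.eq]
      exact ⟨0, S.zero_mem, m, hm, by rw [add_zero, zero_add]⟩
    · intro hm
      have : (m : (subAddCon S).Quotient) = ((0 : M) : (subAddCon S).Quotient) := hm
      rw [AddCon.eq] at this
      obtain ⟨s, hs, t, ht, h⟩ := this
      rw [zero_add] at h
      exact hsub s m hs (by rw [add_comm, h]; exact ht)
  · rintro ⟨⟨N, h, ker⟩⟩ x y hx hxy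
    rw [ker] at hx hxy ⊢
    have := map_add h x y
    rw [hx, zero_add] at this
    rw [← this]; exact hxy
end

section
/- Let R be an inverse semiring and M an R-module. A submodule S of M is subtractive if and only if S is downward closed with respect to the canonical order on M, i.e., if and only if for all x ∈ S and y ∈ M with y ≤ x we have y ∈ S. -/
/-- Over an inverse semiring, a submodule is subtractive iff it is downward
closed with respect to the canonical order. -/
theorem stmt_13 {R : Type*} [Semiring R] (neg : R → R)
    (hinv : ∀ x : R, x + neg x + x = x)
    (hinv' : ∀ x : R, neg x + x + neg x = neg x)
    {M : Type*} [AddCommMonoid M] [Module R M] (S : Submodule R M) :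
    (∀ x y : M, x ∈ S → x + y ∈ S → y ∈ S) ↔
      (∀ x ∈ S, ∀ y : M, (∃ z : M, z + z = z ∧ y + z = x) → y ∈ S) := by
  set n := neg 1 with hn
  have h1 : (1 : R) + n + 1 = 1 := hinv 1
  have key : ∀ m : M, m + n • m + m = m := by
    intro m
    have : ((1 : R) + n + 1) • m = m := by rw [h1, one_smul]
    simpa [add_smul, one_smul] using this
  constructor
  · intro hsub x hx y hy
    obtain ⟨z, hz, hyz⟩ := hy
    -- n • z + z ∈ S
    have hx' : x + (n • z + z) = x := by
      have hk := key z
      calc x + (n • z + z) = y + (z + n • z + z) := by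
            rw [← hyz]; simp only [add_assoc, add_comm, add_left_comm]
        _ = y + z := by rw [hk]
        _ = x := hyz
    have hz' : n • z + z ∈ S := hsub x (n • z + z) hx (by rw [hx']; exact hx)
    have hu : x + n • x ∈ S := S.add_mem hx (S.smul_mem n hx)
    have hmem : x + n • z ∈ S := by
      have : x + n • z = x + (n • z + z) := by
        conv_rhs => rw [← hyz, add_assoc, add_comm (n • z) z, ← add_assoc z z, hz,
          ← add_assoc, hyz]
      rw [this]
      exact S.add_mem hx hz'
    have heq : (x + n • x) + y = x + n • z := by
      have hk := key y
      calc (x + n • x) + y = (y + z) + (n • y + n • z) + y := by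
            rw [← hyz, smul_add]
        _ = (y + n • y + y) + z + n • z := by simp only [add_assoc, add_comm, add_left_comm]
        _ = y + z + n • z := by rw [hk]
        _ = x + n • z := by rw [hyz]
    exact hsub (x + n • x) y hu (by rw [heq]; exact hmem)
  · intro hdown x y hx hxy
    refine hdown (x + y + n • x) (S.add_mem hxy (S.smul_mem n hx)) y
      ⟨x + n • x, ?_, by simp only [add_assoc, add_comm, add_left_comm]⟩
    have : ((1 : R) + n) • x + ((1 : R) + n) • x = ((1 : R) + n) • x := by
      rw [← add_smul]
      congr 1
      calc (1 : R) + n + (1 + n) = (1 + n + 1) + n := by rw [← add_assoc]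
        _ = 1 + n := by rw [h1]
    simpa [add_smul, one_smul] using this
end

section
/- Let R be an inverse semiring, M an R-module, and S a submodule of M. Then S is upward closed with respect to the canonical order on M (i.e., x ∈ S and x ≤ y imply y ∈ S) if and only if E(M) ⊆ S, where E(M) is the set of additive idempotents of M. -/
/-- Over an inverse semiring, a submodule `S` of a module `M` is upward closed
with respect to the canonical order iff it contains all additive idempotents. -/
theorem stmt_15 {R : Type*} [Semiring R] (neg : R → R)
    (hinv : ∀ x : R, x + neg x + x = x)
    (hinv' : ∀ x : R, neg x + x + neg x = neg x)
    {M : Type*} [AddCommMonoid M] [Module R M] (S : Submodule R M) :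
    (∀ x ∈ S, ∀ y : M, (∃ z : M, z + z = z ∧ x + z = y) → y ∈ S) ↔
      (∀ m : M, m + m = m → m ∈ S) := by
  constructor
  · intro h m hm
    exact h 0 S.zero_mem m ⟨m, hm, by simp⟩
  · rintro h x hx y ⟨z, hz, rfl⟩
    exact S.add_mem hx (h z hz)
end

section
/- Let R be an inverse semiring, M an R-module, and S a subtractive submodule of M. Then E(M) ⊆ S if and only if the quotient M/S is an abelian group; concretely, E(M) ⊆ S if and only if for every m ∈ M there exist n ∈ M and s, s' ∈ S with m + n + s = s'. -/
/-- Over an inverse semiring, for a subtractive submodule `S` of `M`: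
`E(M) ⊆ S` iff the quotient `M/S` is an abelian group, i.e. every element of
`M` has an additive inverse modulo `S`. -/
theorem stmt_16 {R : Type*} [Semiring R] (neg : R → R)
    (hinv : ∀ x : R, x + neg x + x = x)
    (hinv' : ∀ x : R, neg x + x + neg x = neg x)
    {M : Type*} [AddCommMonoid M] [Module R M] (S : Submodule R M)
    (hsub : ∀ x y : M, x ∈ S → x + y ∈ S → y ∈ S) :
    (∀ m : M, m + m = m → m ∈ S) ↔
      (∀ m : M, ∃ n : M, ∃ s ∈ S, ∃ s' ∈ S, m + n + s = s') := by
  constructor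
  · intro hE m
    refine ⟨neg 1 • m, 0, S.zero_mem, (1 + neg 1) • m, ?_, ?_⟩
    · apply hE
      rw [← add_smul]
      have he : (1 + neg 1) + (1 + neg 1) = (1 + neg 1) := by
        have h1 := hinv 1
        calc (1 + neg 1) + (1 + neg 1) = (1 + neg 1 + 1) + neg 1 := by
              rw [add_assoc, add_assoc, add_assoc]
        _ = 1 + neg 1 := by rw [h1]
      rw [he]
    · rw [add_zero, add_smul, one_smul]
  · intro h m hm
    obtain ⟨n, s, hs, s', hs', heq⟩ := h m
    apply hsub s' m hs'
    have : s' + m = s' := by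
      rw [← heq]
      calc m + n + s + m = (m + m) + n + s := by abel
      _ = m + n + s := by rw [hm]
    rw [this]; exact hs'
end

section
/- Let R be an inverse semiring and I a subtractive two-sided ideal of R. The following are equivalent: (1) I is upward closed with respect to the canonical order on R; (2) E(R) ⊆ I; (3) 0_1 ∈ I, i.e., 1 + (-1) ∈ I; (4) the quotient R/I is a ring, i.e., for every x ∈ R there exist y ∈ R and s, s' ∈ I with x + y + s = s'. -/
/-- For a subtractive two-sided ideal `I` of an inverse semiring `R`, TFAE:
(1) `I` is upward closed; (2) `E(R) ⊆ I`; (3) `0_1 ∈ I`; (4) `R/I` is a ring. -/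
theorem stmt_17 {R : Type*} [Semiring R] (neg : R → R)
    (hinv : ∀ x : R, x + neg x + x = x)
    (hinv' : ∀ x : R, neg x + x + neg x = neg x)
    (I : Set R) (hI0 : (0 : R) ∈ I)
    (hIadd : ∀ x ∈ I, ∀ y ∈ I, x + y ∈ I)
    (hIml : ∀ r : R, ∀ x ∈ I, r * x ∈ I)
    (hImr : ∀ r : R, ∀ x ∈ I, x * r ∈ I)
    (hsub : ∀ x ∈ I, ∀ y : R, x + y ∈ I → y ∈ I) :
    List.TFAE
      [∀ x ∈ I, ∀ y : R, (∃ z : R, z + z = z ∧ x + z = y) → y ∈ I,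
       ∀ z : R, z + z = z → z ∈ I,
       (1 : R) + neg 1 ∈ I,
       ∀ x : R, ∃ y : R, ∃ s ∈ I, ∃ s' ∈ I, x + y + s = s'] := by
  tfae_have 1 → 2
  · intro h1 z hz
    exact h1 0 hI0 z ⟨z, hz, by simp⟩
  tfae_have 2 → 3
  · intro h2
    apply h2
    calc (1 : R) + neg 1 + (1 + neg 1) = (1 + neg 1 + 1) + neg 1 := by abel
      _ = 1 + neg 1 := by rw [hinv]
  tfae_have 3 → 4
  · intro h3 x
    refine ⟨x * neg 1, 0, hI0, x * (1 + neg 1), hIml x _ h3, ?_⟩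
    rw [mul_add, mul_one, add_zero]
  tfae_have 4 → 1
  · intro h4 x hx y ⟨z, hz, hxz⟩
    obtain ⟨w, s, hs, s', hs', heq⟩ := h4 z
    have hz' : z ∈ I := by
      apply hsub s' hs'
      have : s' + z = s' := by
        rw [← heq]
        calc z + w + s + z = (z + z) + w + s := by abel
          _ = z + w + s := by rw [hz]
      rw [this]; exact hs'
    rw [← hxz]
    exact hIadd x hx z hz'
  tfae_finish
end

section
/- Let R be an inverse semiring, S a ring, T a semiring in which t + t = t for all t ∈ T, and φ : R → S × T an injective semiring homomorphism. Then R is E-unitary: for all x ∈ R and all additive idempotents z ∈ R, if x + z is an additive idempotent, then x is an additive idempotent. -/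
/-- If an inverse semiring `R` embeds (as a semiring) into the product of a
ring `S` and an idempotent semiring `T`, then `R` is E-unitary. -/
theorem stmt_18 {R : Type*} [Semiring R] (neg : R → R)
    (hinv : ∀ x : R, x + neg x + x = x)
    (hinv' : ∀ x : R, neg x + x + neg x = neg x)
    {S : Type*} [Ring S] {T : Type*} [Semiring T] (hT : ∀ t : T, t + t = t)
    (φ : R →+* S × T) (hφ : Function.Injective φ) :
    ∀ x z : R, z + z = z → (x + z) + (x + z) = x + z → x + x = x := by
  intro x z hz hxz
  have hz1 : (φ z).1 + (φ z).1 = (φ z).1 := by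
    have := congrArg (fun r => (φ r).1) hz
    simpa using this
  have hz0 : (φ z).1 = 0 := by
    have := add_right_cancel (a := (φ z).1) (b := (φ z).1) (c := 0)
    apply this; simpa using hz1
  have hxz1 : ((φ x).1 + (φ z).1) + ((φ x).1 + (φ z).1) = (φ x).1 + (φ z).1 := by
    have := congrArg (fun r => (φ r).1) hxz
    simpa using this
  have hx0 : (φ x).1 + (φ x).1 = (φ x).1 := by simpa [hz0] using hxz1
  apply hφ
  ext
  · simpa using hx0
  · simpa using hT (φ x).2
end

section
/- Let R be an E-unitary inverse semiring and let x, y ∈ R satisfy 0_x = 0_y (i.e., x + (-x) = y + (-y)) and x + z = y + z' for some additive idempotents z, z' ∈ R. Then x = y. (Equivalently, the map φ : R → R/E(R) × E(R) sending x to ([x], 0_x) is injective, so R embeds into the product of a ring and an idempotent semiring.) -/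
/-- In an E-unitary inverse semiring, if `0_x = 0_y` and `x + z = y + z'` for
some additive idempotents `z, z'`, then `x = y`. Hence the canonical map
`R → R/E(R) × E(R)` is injective. -/
theorem stmt_19 {R : Type*} [Semiring R] (neg : R → R)
    (hinv : ∀ x : R, x + neg x + x = x)
    (hinv' : ∀ x : R, neg x + x + neg x = neg x)
    (hEU : ∀ x z : R, z + z = z → (x + z) + (x + z) = x + z → x + x = x)
    (x y z z' : R) (hz : z + z = z) (hz' : z' + z' = z')
    (h0 : x + neg x = y + neg y) (hxy : x + z = y + z') :
    x = y := by
  have h0x : (x + neg x) + (x + neg x) = x + neg x := by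
    calc (x + neg x) + (x + neg x) = (x + neg x + x) + neg x := by abel
    _ = x + neg x := by rw [hinv]
  have ha : (neg x + x) + (neg x + x) = neg x + x := by
    calc (neg x + x) + (neg x + x) = (neg x + x + neg x) + x := by abel
    _ = neg x + x := by rw [hinv']
  have hI : ((neg x + x) + z) + ((neg x + x) + z) = (neg x + x) + z := by
    calc ((neg x + x) + z) + ((neg x + x) + z)
        = ((neg x + x) + (neg x + x)) + (z + z) := by abel
    _ = (neg x + x) + z := by rw [ha, hz]
  have huz : (neg x + y) + z' = (neg x + x) + z := by
    rw [add_assoc, add_assoc, ← hxy]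
  have hu : (neg x + y) + (neg x + y) = neg x + y := by
    apply hEU (neg x + y) z' hz'
    rw [huz]; exact hI
  have h1 : (neg x + y) + (x + neg x) = neg x + y := by
    calc (neg x + y) + (x + neg x) = (neg x + x + neg x) + y := by abel
    _ = neg x + y := by rw [hinv']
  have h2 : (neg x + y) + (neg y + x) = x + neg x := by
    calc (neg x + y) + (neg y + x) = (y + neg y) + (x + neg x) := by abel
    _ = (x + neg x) + (x + neg x) := by rw [← h0]
    _ = x + neg x := h0x
  have hu0 : neg x + y = x + neg x := by
    calc neg x + y = (neg x + y) + (x + neg x) := h1.symm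
    _ = (neg x + y) + ((neg x + y) + (neg y + x)) := by rw [h2]
    _ = ((neg x + y) + (neg x + y)) + (neg y + x) := by abel
    _ = (neg x + y) + (neg y + x) := by rw [hu]
    _ = x + neg x := h2
  calc x = (x + neg x) + x := (hinv x).symm
  _ = (neg x + y) + x := by rw [hu0]
  _ = y + (x + neg x) := by abel
  _ = y + (y + neg y) := by rw [h0]
  _ = (y + neg y) + y := by abel
  _ = y := hinv y
end
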